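/- For matrices A = (A1 A2) with A1 ∈ ℝ^{m×k}, any matrix X = (X1 X2) with rank(X) ≤ r and rank(X1) = k ≤ r admits a representation X2 = X1·C + B·D for some matrices C ∈ ℝ^{k×(n−k)}, B ∈ ℝ^{m×(r−k)}, D ∈ ℝ^{(r−k)×(n−k)}. -/

import Mathlib

/-!
The column space `W` of `X = (X₁ X₂)` has dimension at most `r` and contains the column space
`V` of `X₁`, of dimension `k`. A complement of `V` in `W` has dimension at most `r - k`, so it
lies in the column space of some `m × (r - k)` matrix `B`. Hence every column of `X₂` lies in
the column space of `(X₁ B)`, i.e. `X₂ = (X₁ B) (C; D) = X₁ C + B D`.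
-/

open Module Matrix

theorem Submodule.exists_sup_eq_finrank_eq_sub {K V : Type*} [DivisionRing K] [AddCommGroup V]
    [Module K V] [FiniteDimensional K V] {P Q : Submodule K V} (hPQ : P ≤ Q) :
    ∃ U : Submodule K V, P ⊔ U = Q ∧ finrank K U = finrank K Q - finrank K P := by
  obtain ⟨U, hdisj, hsup⟩ := IsModularLattice.exists_disjoint_and_sup_eq hPQ
  refine ⟨U, hsup, ?_⟩
  have := Submodule.finrank_sup_add_finrank_inf_eq P U
  rw [hdisj.eq_bot, finrank_bot, hsup] at this
  omega

namespace Matrix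

section CommSemiring

variable {R : Type*} [CommSemiring R] {m n₁ n₂ p : Type*} [Fintype n₁] [Fintype n₂] [Fintype p]

theorem range_mulVecLin_fromCols (A₁ : Matrix m n₁ R) (A₂ : Matrix m n₂ R) :
    LinearMap.range (fromCols A₁ A₂).mulVecLin =
      LinearMap.range A₁.mulVecLin ⊔ LinearMap.range A₂.mulVecLin := by
  simp only [range_mulVecLin, ← Submodule.span_union, ← Set.Sum.elim_range]
  congr 2
  ext (j | j) i <;> rfl

theorem exists_eq_mul_of_range_mulVecLin_le {A : Matrix m n₁ R} {Z : Matrix m p R}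
    (h : LinearMap.range Z.mulVecLin ≤ LinearMap.range A.mulVecLin) :
    ∃ C : Matrix n₁ p R, Z = A * C := by
  have hcol : ∀ j, ∃ c, A *ᵥ c = Z.col j := fun j =>
    h (by rw [range_mulVecLin]; exact Submodule.subset_span ⟨j, rfl⟩)
  choose c hc using hcol
  refine ⟨(of c)ᵀ, ext_col fun j => ?_⟩
  rw [← hc]
  rfl

end CommSemiring

theorem exists_le_range_mulVecLin {K m : Type*} [Field K] [Fintype m]
    (U : Submodule K (m → K)) {d : ℕ} (hd : finrank K U ≤ d) :
    ∃ B : Matrix m (Fin d) K, U ≤ LinearMap.range B.mulVecLin := by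
  obtain ⟨f, -, hspan, -⟩ := Submodule.exists_fun_fin_finrank_span_eq K (U : Set (m → K))
  replace hd : finrank K (Submodule.span K (U : Set (m → K))) ≤ d := by rwa [U.span_eq]
  let B : Matrix m (Fin d) K := (of (Function.extend (Fin.castLE hd) f 0))ᵀ
  refine ⟨B, ?_⟩
  rw [← U.span_eq, ← hspan, range_mulVecLin]
  refine Submodule.span_mono (Set.range_subset_iff.2 fun i => ⟨Fin.castLE hd i, ?_⟩)
  exact (Fin.castLE_injective hd).extend_apply f 0 i

end Matrix

theorem stmt_0_general (m n k r : ℕ)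
    (X1 : Matrix (Fin m) (Fin k) ℝ) (X2 : Matrix (Fin m) (Fin (n - k)) ℝ)
    (hrank : (Matrix.fromCols X1 X2).rank ≤ r)
    (hX1 : X1.rank = k) :
    ∃ (C : Matrix (Fin k) (Fin (n - k)) ℝ) (B : Matrix (Fin m) (Fin (r - k)) ℝ)
      (D : Matrix (Fin (r - k)) (Fin (n - k)) ℝ),
      X2 = X1 * C + B * D := by
  set V := LinearMap.range X1.mulVecLin
  set W := LinearMap.range (fromCols X1 X2).mulVecLin
  have hW : W = V ⊔ LinearMap.range X2.mulVecLin := range_mulVecLin_fromCols X1 X2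
  obtain ⟨U, hVU, hU⟩ := Submodule.exists_sup_eq_finrank_eq_sub (hW ▸ le_sup_left : V ≤ W)
  obtain ⟨B, hB⟩ := exists_le_range_mulVecLin (d := r - k) U (hU ▸ tsub_le_tsub hrank hX1.ge)
  have hX2 : LinearMap.range X2.mulVecLin ≤ LinearMap.range (fromCols X1 B).mulVecLin :=
    calc LinearMap.range X2.mulVecLin ≤ W := hW ▸ le_sup_right
      _ = V ⊔ U := hVU.symm
      _ ≤ V ⊔ LinearMap.range B.mulVecLin := sup_le_sup_left hB V
      _ = LinearMap.range (fromCols X1 B).mulVecLin := (range_mulVecLin_fromCols X1 B).symm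
  obtain ⟨E, hE⟩ := exists_eq_mul_of_range_mulVecLin_le hX2
  refine ⟨E.toRows₁, B, E.toRows₂, ?_⟩
  rw [hE, ← fromCols_mul_fromRows, fromRows_toRows]

/-- If `X = (X1 X2)` has rank ≤ r and `rank X1 = k ≤ r`, then
`X2 = X1 C + B D` for some matrices `C, B, D` of the indicated sizes. -/
theorem stmt_0 (m n k r : ℕ) (hkr : k ≤ r)
    (X1 : Matrix (Fin m) (Fin k) ℝ) (X2 : Matrix (Fin m) (Fin (n - k)) ℝ)
    (hrank : (Matrix.fromCols X1 X2).rank ≤ r)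
    (hX1 : X1.rank = k) :
    ∃ (C : Matrix (Fin k) (Fin (n - k)) ℝ) (B : Matrix (Fin m) (Fin (r - k)) ℝ)
      (D : Matrix (Fin (r - k)) (Fin (n - k)) ℝ),
      X2 = X1 * C + B * D :=
  stmt_0_general m n k r X1 X2 hrank hX1
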